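/- arXiv:2511.21171 — 3 statements merged into one kernel-verified Lean document; each statement's English description precedes it below -/
import Mathlib

section
/- Let K/F be a quadratic étale extension. The map sending a·F^× ∈ K^×/F^× to the F-linear operator 'multiplication by a/a'' on K is an injective group homomorphism from K^×/F^× into the special orthogonal group of the quadratic space (K, N_{K/F}). -/
/-- Let `K/F` be a quadratic (étale) field extension with conjugation `σ : a ↦ a'`.
The map sending `a·F^×` to multiplication by `a/a'` on `K` is an injective group
homomorphism from `K^×/F^×` to the special orthogonal group of `(K, N_{K/F})`:
it is multiplicative, lands in isometries of the norm form of determinant `1`,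
and its kernel is exactly `F^×`. -/
theorem mul_conj_ratio_injective_hom
    (F K : Type*) [Field F] [Field K] [Algebra F K] [FiniteDimensional F K]
    (hchar : (2 : F) ≠ 0) (hrank : Module.finrank F K = 2)
    (σ : K →ₐ[F] K) (hσ : ∀ x, σ (σ x) = x) (hσne : σ ≠ AlgHom.id F K) :
    (∀ a b : K, a ≠ 0 → b ≠ 0 →
        (fun v : K => ((a * b) / σ (a * b)) * v)
          = (fun v : K => (a / σ a) * v) ∘ (fun v : K => (b / σ b) * v)) ∧
      (∀ a : K, a ≠ 0 → ∀ v : K,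
        ((a / σ a) * v) * σ ((a / σ a) * v) = v * σ v) ∧
      (∀ a : K, a ≠ 0 → LinearMap.det (LinearMap.mulLeft F (a / σ a)) = 1) ∧
      (∀ a : K, a ≠ 0 →
        ((∀ v : K, (a / σ a) * v = v) ↔ ∃ c : F, a = algebraMap F K c)) := by
  have hσ0 : ∀ x : K, x ≠ 0 → σ x ≠ 0 := fun x hx h => hx (by
    have := congrArg σ h
    rw [hσ, map_zero] at this; exact this)
  -- σ as an algebra equivalence
  let e : K ≃ₐ[F] K := AlgEquiv.ofAlgHom σ σ (AlgHom.ext hσ) (AlgHom.ext hσ)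
  -- fixed points of σ are in F
  have hfix : ∀ a : K, σ a = a → ∃ c : F, a = algebraMap F K c := by
    intro a ha
    by_contra hc
    push_neg at hc
    have li : LinearIndependent F ![a, (1 : K)] := by
      rw [linearIndependent_fin2]
      refine ⟨one_ne_zero, fun c h => hc c ?_⟩
      simp only [Matrix.cons_val_one, Matrix.head_cons, Matrix.cons_val_zero] at h
      rw [← h, Algebra.smul_def, mul_one]
    have card : Fintype.card (Fin 2) = Module.finrank F K := by simp [hrank]
    let B := basisOfLinearIndependentOfCardEqFinrank li card
    have hB : ⇑B = ![a, (1 : K)] := coe_basisOfLinearIndependentOfCardEqFinrank li card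
    apply hσne
    have : σ.toLinearMap = (AlgHom.id F K).toLinearMap := by
      apply Module.Basis.ext B
      intro i
      rw [hB]
      fin_cases i
      · simpa using ha
      · simp
    exact AlgHom.ext fun x => LinearMap.congr_fun this x
  refine ⟨?_, ?_, ?_, ?_⟩
  · intro a b ha hb
    funext v
    have hsa := hσ0 a ha
    have hsb := hσ0 b hb
    rw [map_mul]
    simp only [Function.comp_apply]
    field_simp
  · intro a ha v
    have hsa := hσ0 a ha
    rw [map_mul, map_div₀, hσ]
    field_simp
  · intro a ha
    have hsa := hσ0 a ha
    have hm : LinearMap.mulLeft F (a / σ a) = Algebra.lmul F K (a / σ a) := by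
      ext x; simp [LinearMap.mulLeft_apply]
    rw [hm, ← Algebra.norm_apply]
    have hmul : (a / σ a) * σ a = a := div_mul_cancel₀ a hsa
    have hn : Algebra.norm F a ≠ 0 := fun h => ha ((Algebra.norm_eq_zero_iff (R := F) (S := K)).mp h)
    have hs : Algebra.norm F (σ a) = Algebra.norm F a := Algebra.norm_eq_of_algEquiv e a
    have := congrArg (Algebra.norm F) hmul
    rw [map_mul, hs] at this
    field_simp at this
    exact this
  · intro a ha
    have hsa := hσ0 a ha
    constructor
    · intro h
      have h1 := h 1
      rw [mul_one, div_eq_one_iff_eq hsa] at h1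
      exact hfix a h1.symm
    · rintro ⟨c, rfl⟩ v
      rw [AlgHom.commutes, div_self, one_mul]
      simpa using ha
end

section
/- Let χ₄ be the nontrivial Dirichlet character modulo 4 (χ₄(c) = 1 if c ≡ 1 mod 4, −1 if c ≡ 3 mod 4, 0 if c even). Under the hypotheses r² + s² − bc = d·p^{2j} with p odd: if d is even then χ₄(−2(r+s)+2b+c) = χ₄(c), and if d is odd then χ₄(−2(r+s)+2b+c) = −χ₄(c) whenever c is odd; and −2(r+s)+2b+c is even iff c is even. -/
/-!
Since `r ^ 2 ≡ r (mod 2)` and `p ^ (2 j)` is odd, the hypothesis gives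
`r + s ≡ b c + d (mod 2)`, so `-2 (r + s) ≡ -2 b c - 2 d (mod 4)`. For odd `c` the term
`2 b - 2 b c = -2 b (c - 1)` vanishes mod 4, hence `-2 (r + s) + 2 b + c ≡ c - 2 d (mod 4)`:
the same residue as `c` when `d` is even, and the other odd residue when `d` is odd.
-/

/-- The odd Dirichlet character modulo 4: `χ₄(c) = 1` if `c ≡ 1 (mod 4)`, `−1` if
`c ≡ 3 (mod 4)`, and `0` if `c` is even. -/
def chiFour (c : ℤ) : ℤ :=
  if c % 4 = 1 then 1 else if c % 4 = 3 then -1 else 0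

theorem chiFour_congr {a b : ℤ} (h : a ≡ b [ZMOD 4]) : chiFour a = chiFour b := by
  unfold chiFour Int.ModEq at *
  rw [h]

theorem chiFour_eq_zero_of_even {c : ℤ} (hc : Even c) : chiFour c = 0 := by
  obtain ⟨k, rfl⟩ := hc
  unfold chiFour
  split_ifs <;> omega

theorem chiFour_add_two_of_odd {c : ℤ} (hc : Odd c) : chiFour (c + 2) = -chiFour c := by
  obtain ⟨k, rfl⟩ := hc
  unfold chiFour
  split_ifs <;> omega

theorem Int.sq_modEq_two (r : ℤ) : r ^ 2 ≡ r [ZMOD 2] := by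
  obtain ⟨k, hk⟩ := Int.even_mul_pred_self r
  exact Int.modEq_iff_dvd.mpr ⟨-k, by linear_combination (-1) * hk⟩

theorem Int.mul_pow_modEq_two {p : ℤ} (hp : Odd p) (d : ℤ) (n : ℕ) :
    d * p ^ n ≡ d [ZMOD 2] := by
  obtain ⟨t, ht⟩ := hp.pow (n := n)
  exact Int.modEq_iff_dvd.mpr ⟨-d * t, by rw [ht]; ring⟩

theorem neg_two_mul_add_add_modEq {r s b c d : ℤ} (hc : Odd c)
    (hd : r ^ 2 + s ^ 2 - b * c ≡ d [ZMOD 2]) :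
    -2 * (r + s) + 2 * b + c ≡ c - 2 * d [ZMOD 4] := by
  obtain ⟨u, hu⟩ := Int.modEq_iff_dvd.mp <|
    (((Int.sq_modEq_two r).add (Int.sq_modEq_two s)).sub_right (b * c)).symm.trans hd
  obtain ⟨k, rfl⟩ := hc
  exact Int.modEq_iff_dvd.mpr ⟨b * k - u, by linear_combination (-2) * hu⟩

theorem chiFour_of_c_prime_general
    (d p j : ℕ) (hpodd : Odd p)
    (r s b c : ℤ)
    (heq : r ^ 2 + s ^ 2 - b * c = (d : ℤ) * (p : ℤ) ^ (2 * j)) :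
    (Even d → chiFour (-2 * (r + s) + 2 * b + c) = chiFour c) ∧
      (Odd d → Odd c → chiFour (-2 * (r + s) + 2 * b + c) = -chiFour c) ∧
      (Even (-2 * (r + s) + 2 * b + c) ↔ Even c) := by
  have hparity : Even (-2 * (r + s) + 2 * b + c) ↔ Even c := by
    simp [Int.even_add]
  have hmod (hc : Odd c) : -2 * (r + s) + 2 * b + c ≡ c - 2 * d [ZMOD 4] :=
    neg_two_mul_add_add_modEq hc <|
      heq ▸ Int.mul_pow_modEq_two ((Int.odd_coe_nat p).mpr hpodd) d (2 * j)
  refine ⟨fun hd => ?_, fun hd hc => ?_, hparity⟩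
  · rcases Int.even_or_odd c with hc | hc
    · rw [chiFour_eq_zero_of_even hc, chiFour_eq_zero_of_even (hparity.mpr hc)]
    · obtain ⟨k, rfl⟩ := hd
      exact chiFour_congr <| (hmod hc).trans <| Int.modEq_iff_dvd.mpr ⟨k, by push_cast; ring⟩
  · obtain ⟨k, rfl⟩ := hd
    have h : c - 2 * ((2 * k + 1 : ℕ) : ℤ) ≡ c + 2 [ZMOD 4] :=
      Int.modEq_iff_dvd.mpr ⟨k + 1, by push_cast; ring⟩
    rw [chiFour_congr ((hmod hc).trans h), chiFour_add_two_of_odd hc]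

/-- Under the hypotheses `r² + s² − bc = d·p^(2j)` with `p` odd: if `d` is even then
`χ₄(−2(r+s)+2b+c) = χ₄(c)`; if `d` is odd and `c` is odd then
`χ₄(−2(r+s)+2b+c) = −χ₄(c)`; and `−2(r+s)+2b+c` is even iff `c` is even. -/
theorem chiFour_of_c_prime
    (d p j : ℕ) (hd : 0 < d) (hp : 0 < p) (hj : 0 < j) (hpodd : Odd p)
    (r s b c : ℤ)
    (heq : r ^ 2 + s ^ 2 - b * c = (d : ℤ) * (p : ℤ) ^ (2 * j)) :
    (Even d → chiFour (-2 * (r + s) + 2 * b + c) = chiFour c) ∧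
      (Odd d → Odd c → chiFour (-2 * (r + s) + 2 * b + c) = -chiFour c) ∧
      (Even (-2 * (r + s) + 2 * b + c) ↔ Even c) :=
  chiFour_of_c_prime_general d p j hpodd r s b c heq
end

section
/- The matrices g₁ = Id, g₂ = ((0,i),(i,0)), g₃ = ((i,0),(i+1,−i)), g₄ = ((i,−i),(−2i+1,i−1)), g₅ = ((i,0),(i+2,−i)), g₆ = ((i,0),(2i−1,−i)) form a complete set of representatives for the coset space Γ₀(2)\SL₂(ℤ[i]), where Γ₀(2) = { ((x,y),(z,t)) ∈ SL₂(ℤ[i]) : 2 ∣ z }. In particular [SL₂(ℤ[i]) : Γ₀(2)] = 6. -/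
open Matrix

/-- The six matrices `g₁,…,g₆` of the statement, as elements of `SL₂(ℤ[i])`. -/
def gaussianReps : Fin 6 → Matrix.SpecialLinearGroup (Fin 2) GaussianInt
  | 0 => ⟨!![1, 0; 0, 1], by decide⟩
  | 1 => ⟨!![0, ⟨0, 1⟩; ⟨0, 1⟩, 0], by decide⟩
  | 2 => ⟨!![⟨0, 1⟩, 0; ⟨1, 1⟩, ⟨0, -1⟩], by decide⟩
  | 3 => ⟨!![⟨0, 1⟩, ⟨0, -1⟩; ⟨1, -2⟩, ⟨-1, 1⟩], by decide⟩
  | 4 => ⟨!![⟨0, 1⟩, 0; ⟨2, 1⟩, ⟨0, -1⟩], by decide⟩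
  | 5 => ⟨!![⟨0, 1⟩, 0; ⟨-1, 2⟩, ⟨0, -1⟩], by decide⟩

/-- The mod-2 condition, in terms of the residues of the real/imaginary parts of the
bottom row entries of `g`, characterizing `g·gₖ⁻¹ ∈ Γ₀(2)`. -/
def repCond : Fin 6 → ZMod 2 → ZMod 2 → ZMod 2 → ZMod 2 → Prop
  | 0, cr, ci, _, _ => cr = 0 ∧ ci = 0
  | 1, _, _, dr, di => di = 0 ∧ dr = 0
  | 2, cr, ci, dr, di => ci + dr + di = 0 ∧ cr + dr + di = 0
  | 3, cr, ci, dr, di => cr + ci + dr = 0 ∧ cr + ci + di = 0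
  | 4, cr, ci, dr, di => ci + di = 0 ∧ cr + dr = 0
  | 5, cr, ci, dr, di => ci + dr = 0 ∧ cr + di = 0

instance (k : Fin 6) (cr ci dr di : ZMod 2) : Decidable (repCond k cr ci dr di) :=
  match k with
  | 0 => inferInstanceAs (Decidable (_ ∧ _))
  | 1 => inferInstanceAs (Decidable (_ ∧ _))
  | 2 => inferInstanceAs (Decidable (_ ∧ _))
  | 3 => inferInstanceAs (Decidable (_ ∧ _))
  | 4 => inferInstanceAs (Decidable (_ ∧ _))
  | 5 => inferInstanceAs (Decidable (_ ∧ _))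

lemma key (cr ci dr di : ZMod 2) (h : cr + ci = 1 ∨ dr + di = 1) :
    ∃! k : Fin 6, repCond k cr ci dr di := by
  simp only [ExistsUnique]
  revert h; revert cr ci dr di; decide

lemma two_dvd_iff (z : GaussianInt) :
    (2 : GaussianInt) ∣ z ↔ ((z.re : ZMod 2) = 0 ∧ ((z.im : ZMod 2) = 0)) := by
  rw [show (2:GaussianInt) = ((2:ℤ):GaussianInt) by norm_num, Zsqrtd.intCast_dvd]
  simp [ZMod.intCast_zmod_eq_zero_iff_dvd]

lemma cond_iff (g : Matrix.SpecialLinearGroup (Fin 2) GaussianInt) (k : Fin 6) :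
    ((2 : GaussianInt) ∣
          ((g * (gaussianReps k)⁻¹ : Matrix.SpecialLinearGroup (Fin 2) GaussianInt) :
              Matrix (Fin 2) (Fin 2) GaussianInt) 1 0) ↔
      repCond k (((g : Matrix (Fin 2) (Fin 2) GaussianInt) 1 0).re : ZMod 2)
        (((g : Matrix (Fin 2) (Fin 2) GaussianInt) 1 0).im : ZMod 2)
        (((g : Matrix (Fin 2) (Fin 2) GaussianInt) 1 1).re : ZMod 2)
        (((g : Matrix (Fin 2) (Fin 2) GaussianInt) 1 1).im : ZMod 2) := by
  fin_cases k <;>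
  · rw [two_dvd_iff]
    simp [gaussianReps, repCond, Matrix.SpecialLinearGroup.coe_mul, Matrix.SpecialLinearGroup.coe_inv, Matrix.adjugate_fin_two, Matrix.mul_apply, Fin.sum_univ_two, Zsqrtd.re_mul, Zsqrtd.im_mul,
      Zsqrtd.re_add, Zsqrtd.im_add, Zsqrtd.re_neg, Zsqrtd.im_neg]
    try push_cast
    try generalize (((g : Matrix (Fin 2) (Fin 2) GaussianInt) 1 0).re : ZMod 2) = cr
    try generalize (((g : Matrix (Fin 2) (Fin 2) GaussianInt) 1 0).im : ZMod 2) = ci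
    try generalize (((g : Matrix (Fin 2) (Fin 2) GaussianInt) 1 1).re : ZMod 2) = dr
    try generalize (((g : Matrix (Fin 2) (Fin 2) GaussianInt) 1 1).im : ZMod 2) = di
    try (revert cr); try (revert ci); try (revert dr); try (revert di)
    try decide

lemma parity (g : Matrix.SpecialLinearGroup (Fin 2) GaussianInt) :
    (((g : Matrix (Fin 2) (Fin 2) GaussianInt) 1 0).re : ZMod 2) +
      (((g : Matrix (Fin 2) (Fin 2) GaussianInt) 1 0).im : ZMod 2) = 1 ∨
    (((g : Matrix (Fin 2) (Fin 2) GaussianInt) 1 1).re : ZMod 2) +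
      (((g : Matrix (Fin 2) (Fin 2) GaussianInt) 1 1).im : ZMod 2) = 1 := by
  have hdet : (g : Matrix (Fin 2) (Fin 2) GaussianInt) 0 0 * (g : Matrix (Fin 2) (Fin 2) GaussianInt) 1 1
      - (g : Matrix (Fin 2) (Fin 2) GaussianInt) 0 1 * (g : Matrix (Fin 2) (Fin 2) GaussianInt) 1 0 = 1 := by
    have h := g.2
    rwa [Matrix.det_fin_two] at h
  have h0 := congrArg (fun n : ℤ => (n : ZMod 2)) (congrArg (fun z : GaussianInt => z.re + z.im) hdet)
  simp [Zsqrtd.re_mul, Zsqrtd.im_mul, Zsqrtd.re_sub, Zsqrtd.im_sub,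
    Zsqrtd.re_add, Zsqrtd.im_add] at h0
  try push_cast at h0
  generalize (((g : Matrix (Fin 2) (Fin 2) GaussianInt) 0 0).re : ZMod 2) = ar at h0
  generalize (((g : Matrix (Fin 2) (Fin 2) GaussianInt) 0 0).im : ZMod 2) = ai at h0
  generalize (((g : Matrix (Fin 2) (Fin 2) GaussianInt) 0 1).re : ZMod 2) = br at h0
  generalize (((g : Matrix (Fin 2) (Fin 2) GaussianInt) 0 1).im : ZMod 2) = bi at h0
  generalize (((g : Matrix (Fin 2) (Fin 2) GaussianInt) 1 0).re : ZMod 2) = cr at h0 ⊢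
  generalize (((g : Matrix (Fin 2) (Fin 2) GaussianInt) 1 0).im : ZMod 2) = ci at h0 ⊢
  generalize (((g : Matrix (Fin 2) (Fin 2) GaussianInt) 1 1).re : ZMod 2) = dr at h0 ⊢
  generalize (((g : Matrix (Fin 2) (Fin 2) GaussianInt) 1 1).im : ZMod 2) = di at h0 ⊢
  revert h0
  revert ar ai br bi cr ci dr di
  decide

/-- The matrices `g₁ = Id`, `g₂ = ((0,i),(i,0))`, `g₃ = ((i,0),(i+1,−i))`,
`g₄ = ((i,−i),(−2i+1,i−1))`, `g₅ = ((i,0),(i+2,−i))`, `g₆ = ((i,0),(2i−1,−i))` form a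
complete set of representatives for `Γ₀(2)\SL₂(ℤ[i])`, where
`Γ₀(2) = {((x,y),(z,t)) ∈ SL₂(ℤ[i]) : 2 ∣ z}`: every `g ∈ SL₂(ℤ[i])` lies in the
`Γ₀(2)`-coset of exactly one `gₖ` (i.e. `g·gₖ⁻¹ ∈ Γ₀(2)` for a unique `k`).
In particular, `[SL₂(ℤ[i]) : Γ₀(2)] = 6`. -/
theorem gaussianReps_complete :
    ∀ g : Matrix.SpecialLinearGroup (Fin 2) GaussianInt,
      ∃! k : Fin 6,
        (2 : GaussianInt) ∣
          ((g * (gaussianReps k)⁻¹ : Matrix.SpecialLinearGroup (Fin 2) GaussianInt) :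
              Matrix (Fin 2) (Fin 2) GaussianInt) 1 0 := by
  intro g
  exact (existsUnique_congr (cond_iff g)).mpr (key _ _ _ _ (parity g))
end
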